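/- If a set A carries a 2-semilattice operation f (a binary idempotent commutative operation with f(f(x,y),x) = f(x,y)), then the ternary operations p(x,y,z) := f(f(x,z), y) and q(x,y,z) := f(f(x,y),z) satisfy p(x,x,y) = p(x,y,y) and p(x,y,x) = q(x,x,y) = q(x,y,x) = q(y,x,x). -/
import Mathlib


/-- If `f` is a 2-semilattice operation on `A`, then
`p(x,y,z) := f(f(x,z),y)` and `q(x,y,z) := f(f(x,y),z)` satisfy
`p(x,x,y) = p(x,y,y)` and `p(x,y,x) = q(x,x,y) = q(x,y,x) = q(y,x,x)`. -/
theorem two_semilattice_implies_system {A : Type*} (f : A → A → A)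
    (hidem : ∀ x : A, f x x = x)
    (hcomm : ∀ x y : A, f x y = f y x)
    (h2sml : ∀ x y : A, f (f x y) x = f x y) :
    let p : A → A → A → A := fun x y z => f (f x z) y
    let q : A → A → A → A := fun x y z => f (f x y) z
    (∀ x y : A, p x x y = p x y y) ∧
    (∀ x y : A, p x y x = q x x y ∧ q x x y = q x y x ∧ q x y x = q y x x) := by
  intro p q
  constructor
  · intro x y
    show f (f x y) x = f (f x y) y
    rw [h2sml, hcomm x y, h2sml, hcomm]
  · intro x y
    refine ⟨rfl, ?_, ?_⟩
    · show f (f x x) y = f (f x y) x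
      rw [hidem, h2sml]
    · show f (f x y) x = f (f y x) x
      rw [hcomm x y]
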